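/- Let J : ℤ → ℤ[q^{±1/2}] with J(-n) = -J(n) for all n, and let x be an operator in the ℤ[q^{±1/2}]-span of elements E^a Q^b + E^{-a} Q^{-b} (a,b ∈ ℤ) acting on functions ℤ → ℤ[q^{±1/2}]. If ((E - E^{-1})x)J = 0 then xJ = 0. -/

import Mathlib

/-!
Each generator `E^a Q^b + E^{-a} Q^{-b}` maps odd sequences to odd sequences (substitute
`n ↦ -n` and swap the two summands), hence so does `x`, and `g = xJ` is odd. The hypothesis
says `g (n + 1) = g (n - 1)`, so `g` is `2`-periodic; then `g (-n) = g n` because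
`n - (-n) = 2n`, and an even odd function with values in a torsion-free group vanishes.
-/

open LaurentPolynomial

/-- Sequences of Laurent polynomials in `q^{1/2}`, as a module over `ℤ[q^{±1/2}]`. -/
abbrev V : Type := ℤ → LaurentPolynomial ℤ

/-- The operator `E^a Q^b`: `(E^a Q^b f)(n) = q^{(n+a)b} f(n+a)`. -/
noncomputable def EQpow (a b : ℤ) : Module.End (LaurentPolynomial ℤ) V where
  toFun f := fun n => T (2 * (n + a) * b) * f (n + a)
  map_add' f g := by funext n; simp [mul_add]
  map_smul' c f := by funext n; simp [Pi.smul_apply, smul_eq_mul]; ring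

/-- The shift operator `E`. -/
noncomputable def Eop : Module.End (LaurentPolynomial ℤ) V where
  toFun f := fun n => f (n + 1)
  map_add' _ _ := rfl
  map_smul' _ _ := rfl

/-- The backward shift `E⁻¹`. -/
noncomputable def Eop' : Module.End (LaurentPolynomial ℤ) V where
  toFun f := fun n => f (n - 1)
  map_add' _ _ := rfl
  map_smul' _ _ := rfl

instance AddMonoidAlgebra.instIsAddTorsionFree {R M : Type*} [Semiring R] [IsAddTorsionFree R] :
    IsAddTorsionFree (AddMonoidAlgebra R M) :=
  let e : AddMonoidAlgebra R M ≃+ (M →₀ R) := coeffAddEquiv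
  e.injective.isAddTorsionFree e.toAddMonoidHom

theorem Function.Odd.eq_zero_of_periodic_two {β : Type*} [AddCommGroup β] [IsAddTorsionFree β]
    {g : ℤ → β} (hodd : g.Odd) (hper : Function.Periodic g 2) : g = 0 := by
  have heven : g.Even := fun n => by
    simpa [mul_two] using (hper.int_mul n (-n)).symm
  exact Function.zero_of_even_and_odd heven hodd

theorem periodic_two_of_Eop_sub_Eop'_apply_eq_zero {g : V} (h : (Eop - Eop') g = 0) :
    Function.Periodic g 2 := fun n => by
  have hn : g (n + 1 + 1) - g (n + 1 - 1) = 0 := congrFun h (n + 1)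
  rwa [add_assoc, one_add_one_eq_two, add_sub_cancel_right, sub_eq_zero] at hn

theorem odd_EQpow_add_EQpow_neg_apply {f : V} (hf : f.Odd) (a b : ℤ) :
    ((EQpow a b + EQpow (-a) (-b)) f).Odd := fun n => by
  change T (2 * (-n + a) * b) * f (-n + a) + T (2 * (-n + -a) * -b) * f (-n + -a)
    = -(T (2 * (n + a) * b) * f (n + a) + T (2 * (n + -a) * -b) * f (n + -a))
  rw [show -n + a = -(n + -a) by ring, show -n + -a = -(n + a) by ring, hf, hf,
    show 2 * -(n + -a) * b = 2 * (n + -a) * -b by ring,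
    show 2 * -(n + a) * -b = 2 * (n + a) * b by ring]
  ring

theorem odd_apply_of_mem_span_EQpow_add_EQpow_neg {f : V} (hf : f.Odd)
    {x : Module.End (LaurentPolynomial ℤ) V}
    (hx : x ∈ Submodule.span (LaurentPolynomial ℤ)
      {y : Module.End (LaurentPolynomial ℤ) V | ∃ a b : ℤ, y = EQpow a b + EQpow (-a) (-b)}) :
    (x f).Odd := by
  induction hx using Submodule.span_induction with
  | mem y hy =>
    obtain ⟨a, b, rfl⟩ := hy
    exact odd_EQpow_add_EQpow_neg_apply hf a b
  | zero => exact Function.Odd.zero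
  | add y z _ _ hy hz => exact hy.add hz
  | smul c y _ hy => exact hy.const_smul c

/-- If `J` is odd and `x` lies in the `ℤ[q^{±1/2}]`-span of the symmetric operators
`E^a Q^b + E^{-a} Q^{-b}`, and `((E - E⁻¹)x)J = 0`, then `xJ = 0`. -/
theorem stmt7 (J : V) (hJ : ∀ n : ℤ, J (-n) = -J n)
    (x : Module.End (LaurentPolynomial ℤ) V)
    (hx : x ∈ Submodule.span (LaurentPolynomial ℤ)
      {y : Module.End (LaurentPolynomial ℤ) V | ∃ a b : ℤ, y = EQpow a b + EQpow (-a) (-b)})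
    (h : ((Eop - Eop') * x) J = 0) :
    x J = 0 :=
  (odd_apply_of_mem_span_EQpow_add_EQpow_neg hJ hx).eq_zero_of_periodic_two
    (periodic_two_of_Eop_sub_Eop'_apply_eq_zero h)
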